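/- arXiv:1007.3539 — 5 statements merged into one kernel-verified Lean document; each statement's English description precedes it below -/
import Mathlib

section
/- Let v ∈ ℝ^n be non-increasing with non-negative entries summing to 1, with v_{n+1} := 0, and let r_j = ∑_{k=1}^j v_k. Then 1 + ∑_{j=2}^n v_j(r_j − j·v_j)/(r_j·r_{j−1}) ≤ ∑_{j=1}^n 1/j, provided r_{j-1} > 0 for all j ≥ 2. -/
/-! The bound holds summand by summand. Since `v` is non-increasing, `j v_j ≤ r_j`, and
`r_j - j v_j = r_{j-1} - (j - 1) v_j ≤ r_{j-1}`; multiplying gives `j v_j (r_j - j v_j) ≤ r_j r_{j-1}`,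
so the `j`-th summand is at most `1 / j`. -/

open Finset

lemma mul_sub_mul_div_le_one_div {c s v : ℝ} (hc : 1 ≤ c) (hs : 0 < s) (hv : 0 ≤ v)
    (hcv : c * v ≤ s + v) : v * (s + v - c * v) / ((s + v) * s) ≤ 1 / c := by
  have hcv_nonneg : 0 ≤ c * v := by positivity
  have hrest : s + v - c * v ≤ s := by nlinarith
  rw [div_le_div_iff₀ (by positivity) (by positivity)]
  rcases le_total (s + v - c * v) 0 with hneg | hpos
  · nlinarith
  · nlinarith [mul_le_mul hcv hrest hpos (by positivity)]

lemma natCast_mul_le_sum_Icc_one {v : ℕ → ℝ} {j : ℕ} (hle : ∀ k ∈ Icc 1 j, v j ≤ v k) :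
    (j : ℝ) * v j ≤ ∑ k ∈ Icc 1 j, v k := by
  simpa using card_nsmul_le_sum (Icc 1 j) v (v j) hle

lemma sum_Icc_one_eq_sum_Icc_pred_add {M : Type*} [AddCommMonoid M] {v : ℕ → M} {j : ℕ} (hj : 1 ≤ j) :
    ∑ k ∈ Icc 1 j, v k = ∑ k ∈ Icc 1 (j - 1), v k + v j := by
  obtain ⟨i, rfl⟩ := Nat.exists_eq_add_of_le' hj
  rw [sum_Icc_succ_top (by omega), Nat.add_sub_cancel]

lemma sum_Icc_one_eq_add_sum_Icc_two {M : Type*} [AddCommMonoid M] {f : ℕ → M} {n : ℕ} (hn : 1 ≤ n) :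
    ∑ j ∈ Icc 1 n, f j = f 1 + ∑ j ∈ Icc 2 n, f j := by
  rw [← add_sum_Ioc_eq_sum_Icc hn, ← Icc_add_one_left_eq_Ioc]
  rfl

theorem harmonic_bound_general (n : ℕ) (v : ℕ → ℝ)
    (hmono : ∀ i k, 1 ≤ i → i ≤ k → k ≤ n → v k ≤ v i)
    (hnonneg : ∀ i, 1 ≤ i → i ≤ n → 0 ≤ v i)
    (hsum : ∑ i ∈ Finset.Icc 1 n, v i = 1)
    (hr : ∀ j, 2 ≤ j → j ≤ n → 0 < ∑ k ∈ Finset.Icc 1 (j - 1), v k) :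
    1 + ∑ j ∈ Finset.Icc 2 n,
        v j * ((∑ k ∈ Finset.Icc 1 j, v k) - j * v j) /
          ((∑ k ∈ Finset.Icc 1 j, v k) * (∑ k ∈ Finset.Icc 1 (j - 1), v k)) ≤
      ∑ j ∈ Finset.Icc 1 n, (1 : ℝ) / j := by
  have hn : 1 ≤ n := by
    by_contra! h
    simp [Nat.lt_one_iff.mp h] at hsum
  rw [sum_Icc_one_eq_add_sum_Icc_two hn, Nat.cast_one, div_one]
  refine add_le_add_right (sum_le_sum fun j hj => ?_) 1
  obtain ⟨hj2, hjn⟩ := mem_Icc.mp hj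
  have hjv : (j : ℝ) * v j ≤ ∑ k ∈ Icc 1 j, v k :=
    natCast_mul_le_sum_Icc_one fun k hk => hmono k j (mem_Icc.mp hk).1 (mem_Icc.mp hk).2 hjn
  rw [sum_Icc_one_eq_sum_Icc_pred_add (by omega)] at hjv ⊢
  exact mul_sub_mul_div_le_one_div (by exact_mod_cast (by omega : 1 ≤ j)) (hr j hj2 hjn)
    (hnonneg j (by omega) hjn) hjv

/-- Harmonic bound: for a non-increasing non-negative unit-sum vector `v` with
prefix sums `r_j = ∑_{k=1}^j v_k` (all `r_{j-1} > 0` for `j ≥ 2`),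
`1 + ∑_{j=2}^n v_j (r_j - j v_j) / (r_j r_{j-1}) ≤ ∑_{j=1}^n 1/j`. -/
theorem harmonic_bound (n : ℕ) (v : ℕ → ℝ)
    (hmono : ∀ i k, 1 ≤ i → i ≤ k → k ≤ n → v k ≤ v i)
    (hnonneg : ∀ i, 1 ≤ i → i ≤ n → 0 ≤ v i)
    (hsum : ∑ i ∈ Finset.Icc 1 n, v i = 1)
    (hlast : v (n + 1) = 0)
    (hr : ∀ j, 2 ≤ j → j ≤ n → 0 < ∑ k ∈ Finset.Icc 1 (j - 1), v k) :
    1 + ∑ j ∈ Finset.Icc 2 n,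
        v j * ((∑ k ∈ Finset.Icc 1 j, v k) - j * v j) /
          ((∑ k ∈ Finset.Icc 1 j, v k) * (∑ k ∈ Finset.Icc 1 (j - 1), v k)) ≤
      ∑ j ∈ Finset.Icc 1 n, (1 : ℝ) / j :=
  harmonic_bound_general n v hmono hnonneg hsum hr
end

section
/- For the multiplier vector v_j = (√j − √(j−1))/√n (j = 1,...,n), with prefix sums r_j = √j/√n, the quantity ∑_{j=2}^n v_j(r_j − j·v_j)/(r_j·r_{j−1}) is Ω(log n); concretely, there exists a constant c > 0 and N such that for all n ≥ N the sum is at least c·log n. -/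
/-!
Cancelling `√n`, the `j`-th term is `(√j - √(j-1))²`, because `√j - j(√j - √(j-1)) = √j √(j-1) (√j - √(j-1))`.
Since `√j - √(j-1) = 1/(√j + √(j-1)) ≥ 1/(2√j)`, each term is at least `1/(4j)`, and the harmonic sum
`∑_{j=2}^n 1/j ≥ log (n+1) - 1` gives the logarithmic lower bound.
-/

open Real Finset

lemma sqrt_loss_term_eq_sq_sub {x c : ℝ} (hx : 1 < x) (hc : c ≠ 0) :
    ((√x - √(x - 1)) / c) * (√x / c - x * ((√x - √(x - 1)) / c)) /
        ((√x / c) * (√(x - 1) / c)) = (√x - √(x - 1)) ^ 2 := by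
  have hs : √x ^ 2 = x := sq_sqrt (by linarith)
  have ht : √(x - 1) ^ 2 = x - 1 := sq_sqrt (by linarith)
  have hs0 : 0 < √x := sqrt_pos.mpr (by linarith)
  have ht0 : 0 < √(x - 1) := sqrt_pos.mpr (by linarith)
  have key : √x - x * (√x - √(x - 1)) = √x * √(x - 1) * (√x - √(x - 1)) := by
    linear_combination -√(x - 1) * hs + √x * ht
  calc _ = (√x - √(x - 1)) * (√x - x * (√x - √(x - 1))) / (√x * √(x - 1)) := by
        field_simp
    _ = (√x - √(x - 1)) ^ 2 := by
        rw [key]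
        field_simp

lemma inv_four_mul_le_sqrt_sub_sqrt_sub_one_sq {x : ℝ} (hx : 1 ≤ x) :
    (4 * x)⁻¹ ≤ (√x - √(x - 1)) ^ 2 := by
  have hs : √x ^ 2 = x := sq_sqrt (by linarith)
  have ht : √(x - 1) ^ 2 = x - 1 := sq_sqrt (by linarith)
  have hsub : √(x - 1) ≤ √x := sqrt_le_sqrt (by linarith)
  have hconj : (√x - √(x - 1)) * (√x + √(x - 1)) = 1 := by linear_combination hs - ht
  calc (4 * x)⁻¹ = ((2 * √x) ^ 2)⁻¹ := by rw [mul_pow, hs]; norm_num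
    _ ≤ ((√x + √(x - 1)) ^ 2)⁻¹ := by gcongr; linarith
    _ = (√x - √(x - 1)) ^ 2 := by
      rw [← inv_pow, inv_eq_of_mul_eq_one_left hconj]

lemma log_add_one_sub_one_le_sum_Icc_two_inv (n : ℕ) :
    log (n + 1) - 1 ≤ ∑ j ∈ Icc 2 n, (j : ℝ)⁻¹ := by
  rcases Nat.eq_zero_or_pos n with rfl | hn
  · simp
  have := log_add_one_le_harmonic n
  rw [harmonic_eq_sum_Icc, ← insert_Icc_add_one_left_eq_Icc hn, sum_insert (by simp)] at this
  push_cast at this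
  linarith

lemma two_le_log_of_eight_le {x : ℝ} (hx : 8 ≤ x) : 2 ≤ log x := by
  rw [le_log_iff_exp_le (by linarith), show (2 : ℝ) = 1 + 1 by norm_num, exp_add]
  nlinarith [exp_one_lt_d9, exp_pos 1]

/-- For the multiplier vector `v_j = (√j - √(j-1))/√n` with prefix sums
`r_j = √j/√n`, the loss term `∑_{j=2}^n v_j (r_j - j v_j)/(r_j r_{j-1})` is
`Ω(log n)`: there are `c > 0` and `N` such that for all `n ≥ N` the sum is at
least `c · log n`. -/
theorem sqrt_vector_loss_is_Omega_log :
    ∃ c : ℝ, 0 < c ∧ ∃ N : ℕ, ∀ n : ℕ, N ≤ n →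
      c * Real.log n ≤
        ∑ j ∈ Finset.Icc 2 n,
          ((Real.sqrt j - Real.sqrt ((j : ℝ) - 1)) / Real.sqrt n) *
            (Real.sqrt j / Real.sqrt n -
              j * ((Real.sqrt j - Real.sqrt ((j : ℝ) - 1)) / Real.sqrt n)) /
            ((Real.sqrt j / Real.sqrt n) * (Real.sqrt ((j : ℝ) - 1) / Real.sqrt n)) := by
  refine ⟨1 / 8, by norm_num, 8, fun n hn => ?_⟩
  have hn8 : (8 : ℝ) ≤ n := by exact_mod_cast hn
  have hn0 : (0 : ℝ) < n := by linarith
  have hterm : ∀ j ∈ Icc 2 n, 1 / 4 * (j : ℝ)⁻¹ ≤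
      ((√j - √((j : ℝ) - 1)) / √n) * (√j / √n - j * ((√j - √((j : ℝ) - 1)) / √n)) /
        ((√j / √n) * (√((j : ℝ) - 1) / √n)) := by
    intro j hj
    have hj1 : (1 : ℝ) < j := by exact_mod_cast (mem_Icc.mp hj).1
    rw [sqrt_loss_term_eq_sq_sub hj1 (sqrt_pos.mpr hn0).ne', one_div, ← mul_inv]
    exact inv_four_mul_le_sqrt_sub_sqrt_sub_one_sq hj1.le
  calc 1 / 8 * log n ≤ 1 / 4 * (log (n + 1) - 1) := by
        have := log_le_log hn0 (by linarith : (n : ℝ) ≤ n + 1)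
        linarith [two_le_log_of_eight_le hn8]
    _ ≤ 1 / 4 * ∑ j ∈ Icc 2 n, (j : ℝ)⁻¹ := by
        gcongr
        exact log_add_one_sub_one_le_sum_Icc_two_inv n
    _ = ∑ j ∈ Icc 2 n, 1 / 4 * (j : ℝ)⁻¹ := mul_sum _ _ _
    _ ≤ _ := sum_le_sum hterm
end

section
/- Let v ∈ ℝ^n be a multiplier vector (non-increasing, non-negative, summing to 1), q > 0 a threshold, and b > 1. Suppose u ∈ ℝ^n satisfies: there is an index p < n such that (a) u_i ≥ v_i/b and u_i ≤ v_i for i ≤ p, (b) u is constant equal to (1 − ∑_{i≤p} u_i)/(n−p) on indices i > p, and (c) v_i < b/n for all i > p. Then for any non-increasing non-negative sequence g_1 ≥ ... ≥ g_n, ∑_i u_i·g_i ≥ (3/(4b))·∑_i v_i·g_i. -/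
/-!
Split the sums at `p` and put `h = ∑_{i ≤ p} v_i`, `P = ∑_{i ≤ p} v_i g_i`,
`T = ∑_{i > p} v_i g_i`. On the prefix `u ≥ v / b`; on the tail `u` is at least
`(1 - h) / (n - p) ≥ (1 - h) / n ≥ (1 - h) v_i / b`, so `b ∑ u_i g_i ≥ P + (1 - h) T`.
Since `g` is non-increasing, the prefix carries at least its share of the mass:
`H = P / (P + T) ≥ h`, and then `P + (1 - h) T ≥ (H + (1 - H)²) (P + T) ≥ 3/4 (P + T)`.
-/

open Finset

theorem sum_Icc_one_add_sum_Ioc {M : Type*} [AddCommMonoid M] (f : ℕ → M) {p n : ℕ}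
    (hpn : p ≤ n) : ∑ i ∈ Icc 1 p, f i + ∑ i ∈ Ioc p n, f i = ∑ i ∈ Icc 1 n, f i := by
  simpa only [← Icc_add_one_left_eq_Ioc 0, zero_add] using
    sum_Ioc_consecutive f (Nat.zero_le p) hpn

section OrderedSemiring

variable {ι R : Type*} [CommSemiring R] [PartialOrder R] [IsOrderedRing R]

theorem mul_sum_mul_le_sum_mul {s : Finset ι} {c : R} {v u g : ι → R}
    (hvu : ∀ i ∈ s, c * v i ≤ u i) (hg : ∀ i ∈ s, 0 ≤ g i) :
    c * ∑ i ∈ s, v i * g i ≤ ∑ i ∈ s, u i * g i := by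
  rw [mul_sum]
  refine sum_le_sum fun i hi => ?_
  rw [← mul_assoc]
  exact mul_le_mul_of_nonneg_right (hvu i hi) (hg i hi)

theorem sum_mul_sum_mul_le_of_forall_le {s t : Finset ι} {w g : ι → R}
    (hws : ∀ i ∈ s, 0 ≤ w i) (hwt : ∀ j ∈ t, 0 ≤ w j)
    (hg : ∀ i ∈ s, ∀ j ∈ t, g j ≤ g i) :
    (∑ i ∈ s, w i) * ∑ j ∈ t, w j * g j ≤ (∑ j ∈ t, w j) * ∑ i ∈ s, w i * g i := by
  rw [sum_mul_sum, sum_mul_sum, sum_comm (s := t)]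
  refine sum_le_sum fun i hi => sum_le_sum fun j hj => ?_
  calc w i * (w j * g j) = w i * w j * g j := by ring
    _ ≤ w i * w j * g i :=
      mul_le_mul_of_nonneg_left (hg i hi j hj) (mul_nonneg (hws i hi) (hwt j hj))
    _ = w j * (w i * g i) := by ring

end OrderedSemiring

theorem one_sub_div_mul_le_one_sub_div {b n d h s x : ℝ} (hb : 0 < b) (hd : 0 < d)
    (hdn : d ≤ n) (hsh : s ≤ h) (hh : h ≤ 1) (hx : x < b / n) :
    (1 - h) / b * x ≤ (1 - s) / d := by
  have hn : 0 < n := hd.trans_le hdn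
  calc (1 - h) / b * x ≤ (1 - h) / b * (b / n) := by gcongr
    _ = (1 - h) / n := by field_simp
    _ ≤ (1 - h) / d := by gcongr
    _ ≤ (1 - s) / d := by gcongr

theorem three_quarters_mul_add_le {P T h : ℝ} (hP : 0 ≤ P) (hT : 0 ≤ T)
    (hcross : h * T ≤ (1 - h) * P) : 3 / 4 * (P + T) ≤ P + (1 - h) * T := by
  nlinarith [mul_nonneg hT (sq_nonneg (2 * h - 1)), mul_nonneg hP hT]

theorem floor_bound_of_prefix_tail {ι : Type*} {s t : Finset ι} {b : ℝ} {v u g : ι → ℝ}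
    (hb : 0 < b) (hvs : ∀ i ∈ s, 0 ≤ v i) (hvt : ∀ j ∈ t, 0 ≤ v j)
    (hgs : ∀ i ∈ s, 0 ≤ g i) (hgt : ∀ j ∈ t, 0 ≤ g j) (hg : ∀ i ∈ s, ∀ j ∈ t, g j ≤ g i)
    (hmass : ∑ j ∈ t, v j = 1 - ∑ i ∈ s, v i)
    (hprefix : ∀ i ∈ s, v i / b ≤ u i)
    (htail : ∀ j ∈ t, (1 - ∑ i ∈ s, v i) / b * v j ≤ u j) :
    3 / (4 * b) * (∑ i ∈ s, v i * g i + ∑ j ∈ t, v j * g j) ≤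
      ∑ i ∈ s, u i * g i + ∑ j ∈ t, u j * g j := by
  set h := ∑ i ∈ s, v i
  set P := ∑ i ∈ s, v i * g i
  set T := ∑ j ∈ t, v j * g j
  have hcross : h * T ≤ (1 - h) * P := hmass ▸ sum_mul_sum_mul_le_of_forall_le hvs hvt hg
  have hu_prefix : 1 / b * P ≤ ∑ i ∈ s, u i * g i :=
    mul_sum_mul_le_sum_mul (fun i hi => (one_div_mul_eq_div b (v i)).trans_le (hprefix i hi)) hgs
  calc 3 / (4 * b) * (P + T) = 3 / 4 * (P + T) / b := by ring
    _ ≤ (P + (1 - h) * T) / b := by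
      gcongr
      exact three_quarters_mul_add_le (sum_nonneg fun i hi => mul_nonneg (hvs i hi) (hgs i hi))
        (sum_nonneg fun j hj => mul_nonneg (hvt j hj) (hgt j hj)) hcross
    _ = 1 / b * P + (1 - h) / b * T := by ring
    _ ≤ _ := add_le_add hu_prefix (mul_sum_mul_le_sum_mul htail hgt)

theorem floor_lemma_general (n p : ℕ) (b : ℝ) (v u g : ℕ → ℝ)
    (hb : 1 < b) (hp : p < n)
    (hvnonneg : ∀ i, 1 ≤ i → i ≤ n → 0 ≤ v i)
    (hvsum : ∑ i ∈ Finset.Icc 1 n, v i = 1)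
    (hprefix : ∀ i, 1 ≤ i → i ≤ p → v i / b ≤ u i ∧ u i ≤ v i)
    (hconst : ∀ i, p < i → i ≤ n →
        u i = (1 - ∑ k ∈ Finset.Icc 1 p, u k) / ((n : ℝ) - p))
    (htail : ∀ i, p < i → i ≤ n → v i < b / n)
    (hgmono : ∀ i k, 1 ≤ i → i ≤ k → k ≤ n → g k ≤ g i)
    (hgnonneg : ∀ i, 1 ≤ i → i ≤ n → 0 ≤ g i) :
    (3 / (4 * b)) * ∑ i ∈ Finset.Icc 1 n, v i * g i ≤
      ∑ i ∈ Finset.Icc 1 n, u i * g i := by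
  have hb0 : 0 < b := one_pos.trans hb
  have hpn : p ≤ n := hp.le
  have mem_prefix {i} (hi : i ∈ Icc 1 p) : 1 ≤ i ∧ i ≤ n := by grind
  have mem_tail {i} (hi : i ∈ Ioc p n) : 1 ≤ i ∧ i ≤ n := by grind
  have hmass : ∑ i ∈ Ioc p n, v i = 1 - ∑ i ∈ Icc 1 p, v i := by
    rw [← hvsum, ← sum_Icc_one_add_sum_Ioc v hpn]; ring
  have hmass_le_one : ∑ i ∈ Icc 1 p, v i ≤ 1 := by
    linarith [sum_nonneg fun i hi => hvnonneg i (mem_tail hi).1 (mem_tail hi).2]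
  have hnp : (p : ℝ) < n := by exact_mod_cast hp
  rw [← sum_Icc_one_add_sum_Ioc _ hpn, ← sum_Icc_one_add_sum_Ioc _ hpn]
  refine floor_bound_of_prefix_tail hb0
    (fun i hi => hvnonneg i (mem_prefix hi).1 (mem_prefix hi).2)
    (fun i hi => hvnonneg i (mem_tail hi).1 (mem_tail hi).2)
    (fun i hi => hgnonneg i (mem_prefix hi).1 (mem_prefix hi).2)
    (fun i hi => hgnonneg i (mem_tail hi).1 (mem_tail hi).2)
    (fun i hi j hj => hgmono i j (mem_prefix hi).1 (by grind) (mem_tail hj).2)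
    hmass (fun i hi => (hprefix i (mem_Icc.1 hi).1 (mem_Icc.1 hi).2).1) (fun i hi => ?_)
  obtain ⟨hpi, hin⟩ := mem_Ioc.1 hi
  rw [hconst i hpi hin]
  exact one_sub_div_mul_le_one_sub_div hb0 (by linarith) (by linarith [p.cast_nonneg (α := ℝ)])
    (sum_le_sum fun k hk => (hprefix k (mem_Icc.1 hk).1 (mem_Icc.1 hk).2).2) hmass_le_one
    (htail i hpi hin)

/-- Abstract floor lemma (Case 2): if `u` agrees with `v` up to a factor `b` on a
prefix `1..p`, is constant equal to `(1 - ∑_{i≤p} u_i)/(n-p)` on the tail, and the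
tail entries of `v` are below `b/n`, then for any non-increasing non-negative `g`,
`∑ u_i g_i ≥ (3/(4b)) ∑ v_i g_i`. -/
theorem floor_lemma (n p : ℕ) (b : ℝ) (v u g : ℕ → ℝ)
    (hb : 1 < b) (hp : p < n)
    (hvmono : ∀ i k, 1 ≤ i → i ≤ k → k ≤ n → v k ≤ v i)
    (hvnonneg : ∀ i, 1 ≤ i → i ≤ n → 0 ≤ v i)
    (hvsum : ∑ i ∈ Finset.Icc 1 n, v i = 1)
    (hprefix : ∀ i, 1 ≤ i → i ≤ p → v i / b ≤ u i ∧ u i ≤ v i)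
    (hconst : ∀ i, p < i → i ≤ n →
        u i = (1 - ∑ k ∈ Finset.Icc 1 p, u k) / ((n : ℝ) - p))
    (htail : ∀ i, p < i → i ≤ n → v i < b / n)
    (hgmono : ∀ i k, 1 ≤ i → i ≤ k → k ≤ n → g k ≤ g i)
    (hgnonneg : ∀ i, 1 ≤ i → i ≤ n → 0 ≤ g i) :
    (3 / (4 * b)) * ∑ i ∈ Finset.Icc 1 n, v i * g i ≤
      ∑ i ∈ Finset.Icc 1 n, u i * g i :=
  floor_lemma_general n p b v u g hb hp hvnonneg hvsum hprefix hconst htail hgmono hgnonneg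
end

section
/- Let v, u ∈ ℝ^n be non-increasing non-negative vectors. Suppose the staircases (maximal constant runs) of v and u satisfy: for each i < s (where s is the number of steps of u), the i-th step of u has the same height as the i-th step of v, the i-th step of v is at most a times as wide as the i-th step of u (a > 1), the first index of the i-th step of v is ≥ the first index of the i-th step of u, and u_i ≥ v_i on the last step of u. Then for any non-increasing non-negative sequence g_1 ≥ ... ≥ g_n, ∑_i u_i·g_i ≥ (1/a)·∑_i v_i·g_i. -/
/-!
Both sums split into the first `s - 1` steps and a tail starting at step `s`. On step `i` the
two vectors take the same value, so it suffices that the sum of `g` over the `i`-th step of `v`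
is at most `a` times its sum over the `i`-th step of `u`. Since `g` is non-increasing, moving the
`v`-step left to start at `P i` only increases its sum, and by Chebyshev's sum inequality the
averages of the first `m` values of a non-increasing sequence decrease in `m`, which absorbs the
factor `a` between the widths. On the tail `v ≤ u`, and the tail of `u` starts no later.
-/

open Finset

theorem card_mul_sum_range_le_mul_sum_range {f : ℕ → ℝ} {m k : ℕ} (hmk : m ≤ k)
    (hf : AntitoneOn f (Set.Iio k)) :
    (m : ℝ) * ∑ j ∈ range k, f j ≤ k * ∑ j ∈ range m, f j := by
  have hind : AntitoneOn (fun j : ℕ => if j < m then (1 : ℝ) else 0) ↑(range k) := by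
    intro i _ j _ hij
    dsimp only
    split_ifs <;> first | omega | norm_num
  have := (hf.mono (by simp)).monovaryOn hind |>.sum_mul_sum_le_card_mul_sum
  have hfilter : (range k).filter (· < m) = range m := by
    ext j; simp only [mem_filter, mem_range]; omega
  simp only [mul_ite, mul_one, mul_zero, sum_ite, sum_const_zero, add_zero, sum_const,
    nsmul_eq_mul, card_range, hfilter] at this
  linarith

theorem sum_range_le_mul_sum_range {f : ℕ → ℝ} {a : ℝ} {w w' : ℕ} (ha : 1 ≤ a)
    (hw : (w' : ℝ) ≤ a * w) (hf : AntitoneOn f (Set.Iio (max w w')))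
    (hf0 : ∀ j < max w w', 0 ≤ f j) :
    ∑ j ∈ range w', f j ≤ a * ∑ j ∈ range w, f j := by
  have hS0 : 0 ≤ ∑ j ∈ range w, f j :=
    sum_nonneg fun j hj => hf0 j (lt_max_of_lt_left (mem_range.1 hj))
  rcases le_or_gt w' w with hle | hlt
  · calc ∑ j ∈ range w', f j ≤ ∑ j ∈ range w, f j :=
          sum_le_sum_of_subset_of_nonneg (range_subset_range.2 hle) fun j hj _ =>
            hf0 j (lt_max_of_lt_left (mem_range.1 hj))
      _ ≤ a * ∑ j ∈ range w, f j := le_mul_of_one_le_left hS0 ha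
  · rw [max_eq_right hlt.le] at hf
    have hw0 : (0 : ℝ) < w := by
      have : (w : ℝ) < w' := by exact_mod_cast hlt
      nlinarith
    refine le_of_mul_le_mul_left ?_ hw0
    calc (w : ℝ) * ∑ j ∈ range w', f j ≤ w' * ∑ j ∈ range w, f j :=
          card_mul_sum_range_le_mul_sum_range hlt.le hf
      _ ≤ a * w * ∑ j ∈ range w, f j := mul_le_mul_of_nonneg_right hw hS0
      _ = w * (a * ∑ j ∈ range w, f j) := by ring

theorem sum_Ico_le_mul_sum_Ico {g : ℕ → ℝ} {a : ℝ} {p p' r r' N : ℕ} (ha : 1 ≤ a)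
    (hpr : p ≤ r) (hpp' : p ≤ p') (hrr' : r ≤ r') (hp'N : p' ≤ N) (hr'N : r' ≤ N)
    (hw : (r' : ℝ) - r ≤ a * (p' - p)) (hg : AntitoneOn g (Set.Ico p N))
    (hg0 : ∀ k ∈ Set.Ico p N, 0 ≤ g k) :
    ∑ k ∈ Ico r r', g k ≤ a * ∑ k ∈ Ico p p', g k := by
  rw [sum_Ico_eq_sum_range, sum_Ico_eq_sum_range]
  calc ∑ j ∈ range (r' - r), g (r + j) ≤ ∑ j ∈ range (r' - r), g (p + j) :=
        sum_le_sum fun j hj => by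
          rw [mem_range] at hj
          exact hg ⟨by omega, by omega⟩ ⟨by omega, by omega⟩ (by omega)
    _ ≤ a * ∑ j ∈ range (p' - p), g (p + j) := by
        have hw' : ((r' - r : ℕ) : ℝ) ≤ a * (p' - p : ℕ) := by
          push_cast [Nat.cast_sub hrr', Nat.cast_sub hpp']; exact hw
        refine sum_range_le_mul_sum_range ha hw'
          (fun i hi j hj hij => hg ⟨?_, ?_⟩ ⟨?_, ?_⟩ (by omega))
          fun j hj => hg0 _ ⟨?_, ?_⟩
        all_goals first | omega | (simp only [Set.mem_Iio] at *; omega)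

theorem sum_Ico_eq_sum_sum_Ico {M : Type*} [AddCommMonoid M] (F : ℕ → M) {Q : ℕ → ℕ}
    {b c : ℕ} (hbc : b ≤ c) (hQ : MonotoneOn Q (Set.Icc b c)) :
    ∑ k ∈ Ico (Q b) (Q c), F k = ∑ i ∈ Ico b c, ∑ k ∈ Ico (Q i) (Q (i + 1)), F k := by
  induction c, hbc using Nat.le_induction with
  | base => simp
  | succ c hbc ih =>
    have hQ' : MonotoneOn Q (Set.Icc b c) := hQ.mono (Set.Icc_subset_Icc_right c.le_succ)
    rw [sum_Ico_succ_top hbc, ← ih hQ', sum_Ico_consecutive]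
    · exact hQ ⟨le_rfl, by omega⟩ ⟨hbc, by omega⟩ hbc
    · exact hQ ⟨hbc, by omega⟩ ⟨by omega, le_rfl⟩ c.le_succ

theorem sum_Icc_eq_sum_steps_add_sum_Ico {M : Type*} [AddCommMonoid M] (F : ℕ → M)
    {Q : ℕ → ℕ} {n m s : ℕ} (hQ1 : Q 1 = 1) (hQend : Q (m + 1) = n + 1)
    (hQ : MonotoneOn Q (Set.Icc 1 (m + 1))) (hs : 1 ≤ s) (hsm : s ≤ m) :
    ∑ k ∈ Icc 1 n, F k =
      ∑ i ∈ Ico 1 s, ∑ k ∈ Ico (Q i) (Q (i + 1)), F k +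
        ∑ k ∈ Ico (Q s) (n + 1), F k := by
  have hQs : MonotoneOn Q (Set.Icc 1 s) := hQ.mono (Set.Icc_subset_Icc_right (by omega))
  rw [← Ico_add_one_right_eq_Icc, ← sum_Ico_eq_sum_sum_Ico F hs hQs, hQ1, ← hQend,
    sum_Ico_consecutive]
  · exact hQ1 ▸ hQ ⟨le_rfl, by omega⟩ ⟨hs, by omega⟩ hs
  · exact hQ ⟨hs, by omega⟩ ⟨by omega, le_rfl⟩ (by omega)

theorem sum_Ico_mul_le_mul_sum_Ico_mul {u v g : ℕ → ℝ} {a : ℝ} {p r N : ℕ} (ha : 1 ≤ a)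
    (hpr : p ≤ r) (hvu : ∀ k ∈ Set.Ico r N, v k ≤ u k)
    (hu0 : ∀ k ∈ Set.Ico p N, 0 ≤ u k) (hg0 : ∀ k ∈ Set.Ico p N, 0 ≤ g k) :
    ∑ k ∈ Ico r N, v k * g k ≤ a * ∑ k ∈ Ico p N, u k * g k := by
  have hug0 : ∀ k ∈ Ico p N, 0 ≤ u k * g k := fun k hk =>
    mul_nonneg (hu0 k (mem_Ico.1 hk)) (hg0 k (mem_Ico.1 hk))
  calc ∑ k ∈ Ico r N, v k * g k ≤ ∑ k ∈ Ico r N, u k * g k :=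
        sum_le_sum fun k hk => mul_le_mul_of_nonneg_right (hvu k (mem_Ico.1 hk))
          (hg0 k (Set.Ico_subset_Ico_left hpr (mem_Ico.1 hk)))
    _ ≤ ∑ k ∈ Ico p N, u k * g k :=
        sum_le_sum_of_subset_of_nonneg (Ico_subset_Ico_left hpr) fun k hk _ => hug0 k hk
    _ ≤ a * ∑ k ∈ Ico p N, u k * g k := le_mul_of_one_le_left (sum_nonneg hug0) ha

theorem sum_mul_le_mul_sum_mul_of_eq_const {ι : Type*} {A B : Finset ι} {u v g : ι → ℝ}
    {a c : ℝ} (hc : 0 ≤ c) (hv : ∀ k ∈ A, v k = c) (hu : ∀ k ∈ B, u k = c)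
    (hg : ∑ k ∈ A, g k ≤ a * ∑ k ∈ B, g k) :
    ∑ k ∈ A, v k * g k ≤ a * ∑ k ∈ B, u k * g k := by
  calc ∑ k ∈ A, v k * g k = c * ∑ k ∈ A, g k := by
        rw [mul_sum]; exact sum_congr rfl fun k hk => by rw [hv k hk]
    _ ≤ c * (a * ∑ k ∈ B, g k) := mul_le_mul_of_nonneg_left hg hc
    _ = a * ∑ k ∈ B, u k * g k := by
        rw [mul_left_comm, mul_sum]
        exact congrArg _ (sum_congr rfl fun k hk => by rw [hu k hk])

theorem core_lemma_general (n s t : ℕ) (a : ℝ) (u v g : ℕ → ℝ) (P R : ℕ → ℕ)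
    (ha : 1 < a) (hs : 1 ≤ s) (hst : s ≤ t)
    (hP1 : P 1 = 1) (hPend : P (s + 1) = n + 1)
    (hPmono : ∀ i k, 1 ≤ i → i < k → k ≤ s + 1 → P i < P k)
    (hR1 : R 1 = 1) (hRend : R (t + 1) = n + 1)
    (hRmono : ∀ i k, 1 ≤ i → i < k → k ≤ t + 1 → R i < R k)
    (huconst : ∀ i, 1 ≤ i → i ≤ s → ∀ k, P i ≤ k → k < P (i + 1) → u k = u (P i))
    (hvconst : ∀ i, 1 ≤ i → i ≤ t → ∀ k, R i ≤ k → k < R (i + 1) → v k = v (R i))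
    (hheight : ∀ i, 1 ≤ i → i < s → v (R i) = u (P i))
    (hwidth : ∀ i, 1 ≤ i → i < s →
        ((R (i + 1) : ℝ) - R i) ≤ a * ((P (i + 1) : ℝ) - P i))
    (hfirst : ∀ i, 1 ≤ i → i ≤ s → P i ≤ R i)
    (hlaststep : ∀ i, P s ≤ i → i ≤ n → v i ≤ u i)
    (hunonneg : ∀ i, 1 ≤ i → i ≤ n → 0 ≤ u i)
    (hgmono : ∀ i k, 1 ≤ i → i ≤ k → k ≤ n → g k ≤ g i)
    (hgnonneg : ∀ i, 1 ≤ i → i ≤ n → 0 ≤ g i) :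
    (1 / a) * ∑ i ∈ Finset.Icc 1 n, v i * g i ≤
      ∑ i ∈ Finset.Icc 1 n, u i * g i := by
  have hP : StrictMonoOn P (Set.Icc 1 (s + 1)) := fun i hi k hk hik => hPmono i k hi.1 hik hk.2
  have hR : StrictMonoOn R (Set.Icc 1 (t + 1)) := fun i hi k hk hik => hRmono i k hi.1 hik hk.2
  have hPmem : Set.MapsTo P (Set.Ico 1 (s + 1)) (Set.Ico 1 (n + 1)) := by
    simpa only [hP1, hPend] using hP.mapsTo_Ico
  have hRmem : Set.MapsTo R (Set.Ico 1 (t + 1)) (Set.Ico 1 (n + 1)) := by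
    simpa only [hR1, hRend] using hR.mapsTo_Ico
  have hg : AntitoneOn g (Set.Ico 1 (n + 1)) := fun i hi k hk hik =>
    hgmono i k hi.1 hik (Nat.lt_succ_iff.1 hk.2)
  have hg0 : ∀ k ∈ Set.Ico 1 (n + 1), 0 ≤ g k := fun k hk =>
    hgnonneg k hk.1 (Nat.lt_succ_iff.1 hk.2)
  have hu0 : ∀ k ∈ Set.Ico 1 (n + 1), 0 ≤ u k := fun k hk =>
    hunonneg k hk.1 (Nat.lt_succ_iff.1 hk.2)
  have hstep : ∀ i ∈ Ico 1 s, ∑ k ∈ Ico (R i) (R (i + 1)), v k * g k ≤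
      a * ∑ k ∈ Ico (P i) (P (i + 1)), u k * g k := by
    intro i hi
    obtain ⟨hi1, his⟩ := mem_Ico.1 hi
    have hPi : P i ∈ Set.Ico 1 (n + 1) := hPmem ⟨hi1, by omega⟩
    have hsub : Set.Ico (P i) (n + 1) ⊆ Set.Ico 1 (n + 1) := Set.Ico_subset_Ico_left hPi.1
    have hblock := sum_Ico_le_mul_sum_Ico ha.le (hfirst i hi1 his.le)
      (hPmono i (i + 1) hi1 (by omega) (by omega)).le
      (hRmono i (i + 1) hi1 (by omega) (by omega)).le
      (hPmem ⟨by omega, by omega⟩).2.le (hRmem ⟨by omega, by omega⟩).2.le (hwidth i hi1 his)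
      (hg.mono hsub) fun k hk => hg0 k (hsub hk)
    refine sum_mul_le_mul_sum_mul_of_eq_const (hu0 _ hPi) (fun k hk => ?_) (fun k hk => ?_) hblock
    · rw [← hheight i hi1 his]
      exact hvconst i hi1 (by omega) k (mem_Ico.1 hk).1 (mem_Ico.1 hk).2
    · exact huconst i hi1 his.le k (mem_Ico.1 hk).1 (mem_Ico.1 hk).2
  have hsub : Set.Ico (P s) (n + 1) ⊆ Set.Ico 1 (n + 1) :=
    Set.Ico_subset_Ico_left (hPmem ⟨hs, by omega⟩).1
  have htail := sum_Ico_mul_le_mul_sum_Ico_mul ha.le (hfirst s hs le_rfl)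
    (fun k hk => hlaststep k ((hfirst s hs le_rfl).trans hk.1) (Nat.lt_succ_iff.1 hk.2))
    (fun k hk => hu0 k (hsub hk)) fun k hk => hg0 k (hsub hk)
  rw [one_div, inv_mul_le_iff₀ (by linarith),
    sum_Icc_eq_sum_steps_add_sum_Ico _ hR1 hRend hR.monotoneOn hs hst,
    sum_Icc_eq_sum_steps_add_sum_Ico _ hP1 hPend hP.monotoneOn hs le_rfl, mul_add, mul_sum]
  exact add_le_add (sum_le_sum hstep) htail

/-- Core (horizontal fitting) lemma: `u` and `v` are non-increasing non-negative
vectors whose staircases (maximal constant runs, with step-start indices `P` for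
`u` and `R` for `v`, `s` resp. `t` steps) satisfy: for each `i < s` the `i`-th
steps have equal height, the `i`-th step of `v` is at most `a` times as wide as
that of `u`, the `i`-th step of `v` starts no earlier than that of `u`, and
`u ≥ v` pointwise on the last step of `u`. Then for any non-increasing
non-negative `g`, `∑ u_i g_i ≥ (1/a) ∑ v_i g_i`. -/
theorem core_lemma (n s t : ℕ) (a : ℝ) (u v g : ℕ → ℝ) (P R : ℕ → ℕ)
    (ha : 1 < a) (hs : 1 ≤ s) (hst : s ≤ t)
    (hP1 : P 1 = 1) (hPend : P (s + 1) = n + 1)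
    (hPmono : ∀ i k, 1 ≤ i → i < k → k ≤ s + 1 → P i < P k)
    (hR1 : R 1 = 1) (hRend : R (t + 1) = n + 1)
    (hRmono : ∀ i k, 1 ≤ i → i < k → k ≤ t + 1 → R i < R k)
    (huconst : ∀ i, 1 ≤ i → i ≤ s → ∀ k, P i ≤ k → k < P (i + 1) → u k = u (P i))
    (hvconst : ∀ i, 1 ≤ i → i ≤ t → ∀ k, R i ≤ k → k < R (i + 1) → v k = v (R i))
    (humax : ∀ i, 1 ≤ i → i < s → u (P (i + 1)) < u (P i))
    (hvmax : ∀ i, 1 ≤ i → i < t → v (R (i + 1)) < v (R i))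
    (hheight : ∀ i, 1 ≤ i → i < s → v (R i) = u (P i))
    (hwidth : ∀ i, 1 ≤ i → i < s →
        ((R (i + 1) : ℝ) - R i) ≤ a * ((P (i + 1) : ℝ) - P i))
    (hfirst : ∀ i, 1 ≤ i → i ≤ s → P i ≤ R i)
    (hlaststep : ∀ i, P s ≤ i → i ≤ n → v i ≤ u i)
    (humono : ∀ i k, 1 ≤ i → i ≤ k → k ≤ n → u k ≤ u i)
    (hunonneg : ∀ i, 1 ≤ i → i ≤ n → 0 ≤ u i)
    (hvmono : ∀ i k, 1 ≤ i → i ≤ k → k ≤ n → v k ≤ v i)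
    (hvnonneg : ∀ i, 1 ≤ i → i ≤ n → 0 ≤ v i)
    (hgmono : ∀ i k, 1 ≤ i → i ≤ k → k ≤ n → g k ≤ g i)
    (hgnonneg : ∀ i, 1 ≤ i → i ≤ n → 0 ≤ g i) :
    (1 / a) * ∑ i ∈ Finset.Icc 1 n, v i * g i ≤
      ∑ i ∈ Finset.Icc 1 n, u i * g i :=
  core_lemma_general n s t a u v g P R ha hs hst hP1 hPend hPmono hR1 hRend hRmono huconst hvconst
    hheight hwidth hfirst hlaststep hunonneg hgmono hgnonneg
end

section
/- Suppose for every multiplier vector v (non-increasing, non-negative, unit sum) there exists a vector u = φ(v) in a fixed finite set U and, for each u ∈ U, an allocation value vector g^u ∈ ℝ^n (non-increasing, non-negative) such that: (i) ⟨u, g^u⟩ ≥ α·sup_{g ∈ G} ⟨u, g⟩ over the set G of feasible sorted allocation value vectors, (ii) ⟨φ(v), g⟩ ≥ c·⟨v, g⟩ for every g ∈ G sorted non-increasingly, and (iii) v dominates φ(v). Then the allocation T ∈ {g^u : u ∈ U} maximizing ⟨v, T⟩ satisfies ⟨v, T⟩ ≥ α·c·sup_{g ∈ G} ⟨v, g⟩.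 -/
/-!
Run the black box on the fitted vector `φ v`. Fitting costs a factor `c` and the black box a
factor `α`, measured against `φ v`. Passing back from `φ v` to `v` costs nothing: the two vectors
have the same sum and `v - φ v` changes sign only once, from nonnegative to nonpositive. Since
`B (φ v)` is non-increasing, this puts `B (φ v)` at least as high under `v` as under `φ v`.
Finally, the maximizer `T` does at least as well as `B (φ v)`.
-/

open Finset

def Dominates {n : ℕ} (v u : Fin n → ℝ) : Prop :=
  ∃ i0 : ℕ, (∀ k : Fin n, (k : ℕ) < i0 → u k ≤ v k) ∧ (∀ k : Fin n, i0 ≤ (k : ℕ) → v k ≤ u k)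

/-- Since `u` and `v` have the same sum, `g` may be shifted by any constant `t` without changing
`∑ (v - u) g`. -/
theorem sum_mul_le_sum_mul_of_sum_eq {ι : Type*} (s : Finset ι) {u v g : ι → ℝ} (t : ℝ)
    (hsum : ∑ i ∈ s, u i = ∑ i ∈ s, v i) (hsign : ∀ i ∈ s, 0 ≤ (v i - u i) * (g i - t)) :
    ∑ i ∈ s, u i * g i ≤ ∑ i ∈ s, v i * g i := by
  have hshift : ∑ i ∈ s, v i * g i - ∑ i ∈ s, u i * g i
      = ∑ i ∈ s, (v i - u i) * (g i - t) + t * (∑ i ∈ s, v i - ∑ i ∈ s, u i) := by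
    simp only [← sum_sub_distrib, mul_sum, ← sum_add_distrib]
    exact sum_congr rfl fun i _ => by ring
  rw [hsum, sub_self, mul_zero, add_zero] at hshift
  linarith [sum_nonneg hsign]

theorem Dominates.sum_mul_le {n : ℕ} {v u g : Fin n → ℝ} (hdom : Dominates v u)
    (hsum : ∑ i, u i = ∑ i, v i) (hg : Antitone g) (hg0 : ∀ i, 0 ≤ g i) :
    ∑ i, u i * g i ≤ ∑ i, v i * g i := by
  obtain ⟨i0, hlow, hhigh⟩ := hdom
  rcases lt_or_ge i0 n with hi0 | hi0
  · refine sum_mul_le_sum_mul_of_sum_eq _ (g ⟨i0, hi0⟩) hsum fun k _ => ?_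
    rcases lt_or_ge (k : ℕ) i0 with hk | hk
    · exact mul_nonneg (sub_nonneg.2 (hlow k hk)) (sub_nonneg.2 (hg (Fin.le_def.2 hk.le)))
    · exact mul_nonneg_of_nonpos_of_nonpos (sub_nonpos.2 (hhigh k hk))
        (sub_nonpos.2 (hg (Fin.le_def.2 hk)))
  · refine sum_mul_le_sum_mul_of_sum_eq _ 0 hsum fun k _ => ?_
    rw [sub_zero]
    exact mul_nonneg (sub_nonneg.2 (hlow k (k.isLt.trans_le hi0))) (hg0 k)

theorem maximal_in_range_general (n : ℕ) (G : Set (Fin n → ℝ)) (U : Finset (Fin n → ℝ))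
    (φ B : (Fin n → ℝ) → (Fin n → ℝ)) (α c : ℝ) (v T : Fin n → ℝ)
    (hα0 : 0 < α)
    (hG : ∀ g ∈ G, Antitone g ∧ ∀ i, 0 ≤ g i)
    (hvsum : ∑ i, v i = 1)
    (hφU : φ v ∈ U)
    (hφv : Antitone (φ v) ∧ (∀ i, 0 ≤ φ v i) ∧ ∑ i, φ v i = 1)
    (hBG : ∀ u ∈ U, B u ∈ G)
    (hApprox : ∀ u ∈ U, ∀ g ∈ G, α * ∑ i, u i * g i ≤ ∑ i, u i * B u i)
    (hFit : ∀ g ∈ G, c * ∑ i, v i * g i ≤ ∑ i, φ v i * g i)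
    (hDom : ∃ i0 : ℕ, (∀ k : Fin n, (k : ℕ) < i0 → φ v k ≤ v k) ∧
      (∀ k : Fin n, i0 ≤ (k : ℕ) → v k ≤ φ v k))
    (hTmax : ∀ u ∈ U, ∑ i, v i * B u i ≤ ∑ i, v i * T i) :
    ∀ g ∈ G, α * c * ∑ i, v i * g i ≤ ∑ i, v i * T i := by
  intro g hg
  obtain ⟨hB, hB0⟩ := hG _ (hBG _ hφU)
  have hdom : Dominates v (φ v) := hDom
  calc α * c * ∑ i, v i * g i = α * (c * ∑ i, v i * g i) := mul_assoc _ _ _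
    _ ≤ α * ∑ i, φ v i * g i := mul_le_mul_of_nonneg_left (hFit g hg) hα0.le
    _ ≤ ∑ i, φ v i * B (φ v) i := hApprox _ hφU g hg
    _ ≤ ∑ i, v i * B (φ v) i := hdom.sum_mul_le (hφv.2.2.trans hvsum.symm) hB hB0
    _ ≤ ∑ i, v i * T i := hTmax _ hφU

/-- Abstract maximal-in-range argument (Theorem 1): if every multiplier vector `v`
has a fitted vector `φ v` in the finite index set `U`, the black box `B` is
`α`-approximate on each `u ∈ U` over the feasible set `G` of sorted allocation
value vectors, fitting loses at most a factor `c`, and `v` dominates `φ v`, then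
the allocation `T` maximizing `⟨v, ·⟩` over `{B u : u ∈ U}` is `α·c`-approximate
for `v`. -/
theorem maximal_in_range (n : ℕ) (G : Set (Fin n → ℝ)) (U : Finset (Fin n → ℝ))
    (φ B : (Fin n → ℝ) → (Fin n → ℝ)) (α c : ℝ) (v T : Fin n → ℝ)
    (hα0 : 0 < α) (hα1 : α ≤ 1) (hc0 : 0 < c) (hc1 : c ≤ 1)
    (hG : ∀ g ∈ G, Antitone g ∧ ∀ i, 0 ≤ g i)
    (hv : Antitone v) (hv0 : ∀ i, 0 ≤ v i) (hvsum : ∑ i, v i = 1)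
    (hφU : φ v ∈ U)
    (hφv : Antitone (φ v) ∧ (∀ i, 0 ≤ φ v i) ∧ ∑ i, φ v i = 1)
    (hBG : ∀ u ∈ U, B u ∈ G)
    (hApprox : ∀ u ∈ U, ∀ g ∈ G, α * ∑ i, u i * g i ≤ ∑ i, u i * B u i)
    (hFit : ∀ g ∈ G, c * ∑ i, v i * g i ≤ ∑ i, φ v i * g i)
    (hDom : ∃ i0 : ℕ, (∀ k : Fin n, (k : ℕ) < i0 → φ v k ≤ v k) ∧
      (∀ k : Fin n, i0 ≤ (k : ℕ) → v k ≤ φ v k))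
    (hT : ∃ u ∈ U, T = B u)
    (hTmax : ∀ u ∈ U, ∑ i, v i * B u i ≤ ∑ i, v i * T i) :
    ∀ g ∈ G, α * c * ∑ i, v i * g i ≤ ∑ i, v i * T i :=
  maximal_in_range_general n G U φ B α c v T hα0 hG hvsum hφU hφv hBG hApprox hFit hDom hTmax
end
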